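/- arXiv:1101.3219 — 8 statements merged into one kernel-verified Lean document; each statement's English description precedes it below -/
import Mathlib

section
/- Let X and Y be measurable spaces, r : X → Y a measurable map, and (λ^y)_{y∈Y} a kernel from Y to X (i.e. y ↦ λ^y(E) is measurable for every measurable E ⊆ X) such that for every y ∈ Y the measure λ^y is concentrated on the fiber r⁻¹{y} (i.e. λ^y(X \ r⁻¹{y}) = 0) and λ^y(X) > 0. Let μ⁰ be a measure on Y and define the measure μ on X by μ(E) = ∫_Y λ^y(E) dμ⁰(y). Then the pushforward measure r_*μ and μ⁰ are mutually absolutely continuous. -/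
/-! Since `λ^y` lives on the fibre over `y`, pushing it forward along `r` gives the point mass
`λ^y(X) • δ_y`. Hence `r_* μ` is `μ⁰` with the density `y ↦ λ^y(X)`, which is everywhere positive,
and a measure with an everywhere positive density is equivalent to the base measure. -/

open MeasureTheory ProbabilityTheory
open scoped ENNReal

namespace ProbabilityTheory.Kernel

variable {X Y : Type*} [MeasurableSpace X] [MeasurableSpace Y]

lemma map_apply_eq_smul_dirac_of_measure_compl_fiber_eq_zero {κ : Kernel Y X} {r : X → Y}
    (hr : Measurable r) (hconc : ∀ y, κ y ((r ⁻¹' {y})ᶜ) = 0) (y : Y) :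
    κ.map r y = κ y Set.univ • Measure.dirac y := by
  rw [Kernel.map_apply _ hr]
  exact (hasLaw_smul_dirac_of_ae_eq (ae_iff.mpr (hconc y))).map_eq

lemma comp_eq_withDensity_of_eq_smul_dirac {κ : Kernel Y Y} {f : Y → ℝ≥0∞}
    (hκ : ∀ y, κ y = f y • Measure.dirac y) (μ : Measure Y) :
    κ ∘ₘ μ = μ.withDensity f := by
  ext E hE
  rw [Measure.bind_apply hE κ.aemeasurable, withDensity_apply _ hE, ← lintegral_indicator hE]
  refine lintegral_congr fun y ↦ ?_
  by_cases hy : y ∈ E <;> simp [hκ y, Measure.dirac_apply' _ hE, hy]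

lemma map_comp_eq_withDensity_of_measure_compl_fiber_eq_zero {κ : Kernel Y X} {r : X → Y}
    (hr : Measurable r) (hconc : ∀ y, κ y ((r ⁻¹' {y})ᶜ) = 0) (μ : Measure Y) :
    (κ ∘ₘ μ).map r = μ.withDensity fun y ↦ κ y Set.univ := by
  rw [Measure.map_comp _ _ hr, comp_eq_withDensity_of_eq_smul_dirac
    (map_apply_eq_smul_dirac_of_measure_compl_fiber_eq_zero hr hconc)]

end ProbabilityTheory.Kernel

/-- Lemma 2.9: the pushforward of the induced measure under `r` is mutually
absolutely continuous with `μ0`. -/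
theorem stmt_0 {X Y : Type*} [MeasurableSpace X] [MeasurableSpace Y]
    (r : X → Y) (hr : Measurable r)
    (lam : Kernel Y X)
    (hconc : ∀ y, lam y ((r ⁻¹' {y})ᶜ) = 0)
    (hpos : ∀ y, 0 < lam y Set.univ)
    (μ0 : Measure Y) (μ : Measure X)
    (hμ : ∀ E : Set X, MeasurableSet E → μ E = ∫⁻ y, lam y E ∂μ0) :
    μ.map r ≪ μ0 ∧ μ0 ≪ μ.map r := by
  have hμ_comp : μ = lam ∘ₘ μ0 :=
    Measure.ext fun E hE ↦ by rw [hμ E hE, Measure.bind_apply hE lam.aemeasurable]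
  rw [hμ_comp, Kernel.map_comp_eq_withDensity_of_measure_compl_fiber_eq_zero hr hconc]
  exact ⟨withDensity_absolutelyContinuous _ _,
    withDensity_absolutelyContinuous' (lam.measurable_coe .univ).aemeasurable
      (ae_of_all _ fun y ↦ (hpos y).ne')⟩
end

section
/- Let X be a locally compact Hausdorff topological space, Y a topological space, both equipped with their Borel σ-algebras, and r : X → Y a continuous map. Let (λ^y)_{y∈Y} be a kernel from Y to X (y ↦ λ^y(E) measurable for every Borel E) such that each λ^y is concentrated on r⁻¹{y} (λ^y(X \ r⁻¹{y}) = 0), and which is locally bounded: every x ∈ X has an open neighborhood U and a constant C > 0 with λ^y(U) ≤ C for all y ∈ Y. Let μ⁰ be a locally finite Borel measure on Y. Then the measure μ on X defined by μ(E) = ∫_Y λ^y(E) dμ⁰(y) is locally finite. -/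
open MeasureTheory ProbabilityTheory
open scoped ENNReal NNReal

/-!
A point `x` has an open neighbourhood `U` on which the kernel is bounded by `C`, and `r x` has an
open neighbourhood `V` of finite `μ0`-measure. On `U ∩ r⁻¹ V` the fibre measures `λ^y` vanish
for `y ∉ V` (they are concentrated on `r⁻¹{y}`) and are at most `C` for `y ∈ V`, so
`μ (U ∩ r⁻¹ V) ≤ C · μ0 V < ∞`.
-/

section FibreConcentrated

variable {X Y : Type*} [MeasurableSpace X] {κ : Y → Measure X} {r : X → Y}

theorem measure_preimage_eq_zero_of_notMem (hconc : ∀ y, κ y ((r ⁻¹' {y})ᶜ) = 0)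
    {V : Set Y} {y : Y} (hy : y ∉ V) : κ y (r ⁻¹' V) = 0 :=
  measure_mono_null (fun _ hx (hxy : _ = y) => hy (hxy ▸ hx)) (hconc y)

theorem measure_inter_preimage_le_indicator (hconc : ∀ y, κ y ((r ⁻¹' {y})ᶜ) = 0)
    {U : Set X} {C : ℝ≥0∞} (hC : ∀ y, κ y U ≤ C) (V : Set Y) (y : Y) :
    κ y (U ∩ r ⁻¹' V) ≤ V.indicator (fun _ => C) y := by
  by_cases hy : y ∈ V
  · rw [Set.indicator_of_mem hy]
    exact (measure_mono Set.inter_subset_left).trans (hC y)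
  · rw [Set.indicator_of_notMem hy,
      measure_mono_null Set.inter_subset_right (measure_preimage_eq_zero_of_notMem hconc hy)]

theorem lintegral_measure_inter_preimage_le [MeasurableSpace Y]
    (hconc : ∀ y, κ y ((r ⁻¹' {y})ᶜ) = 0)
    {U : Set X} {C : ℝ≥0∞} (hC : ∀ y, κ y U ≤ C) (ν : Measure Y) {V : Set Y}
    (hV : MeasurableSet V) : ∫⁻ y, κ y (U ∩ r ⁻¹' V) ∂ν ≤ C * ν V :=
  calc ∫⁻ y, κ y (U ∩ r ⁻¹' V) ∂ν
      ≤ ∫⁻ y, V.indicator (fun _ => C) y ∂ν :=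
        lintegral_mono (measure_inter_preimage_le_indicator hconc hC V)
    _ = C * ν V := lintegral_indicator_const hV C

end FibreConcentrated

theorem stmt_2_general {X Y : Type*}
    [TopologicalSpace X]
    [MeasurableSpace X] [BorelSpace X]
    [TopologicalSpace Y] [MeasurableSpace Y] [BorelSpace Y]
    (r : X → Y) (hr : Continuous r)
    (lam : Kernel Y X)
    (hconc : ∀ y, lam y ((r ⁻¹' {y})ᶜ) = 0)
    (hlb : ∀ x : X, ∃ U : Set X, IsOpen U ∧ x ∈ U ∧
      ∃ C : ℝ≥0, 0 < C ∧ ∀ y, lam y U ≤ C)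
    (μ0 : Measure Y) [IsLocallyFiniteMeasure μ0]
    (μ : Measure X)
    (hμ : ∀ E : Set X, MeasurableSet E → μ E = ∫⁻ y, lam y E ∂μ0) :
    IsLocallyFiniteMeasure μ := by
  refine ⟨fun x => ?_⟩
  obtain ⟨U, hU, hxU, C, -, hC⟩ := hlb x
  obtain ⟨V, ⟨hxV, hVopen⟩, hVfin⟩ :=
    (μ0.finiteAt_nhds (r x)).exists_mem_basis (nhds_basis_opens (r x))
  have hW : IsOpen (U ∩ r ⁻¹' V) := hU.inter (hVopen.preimage hr)
  refine ⟨U ∩ r ⁻¹' V, hW.mem_nhds ⟨hxU, hxV⟩, ?_⟩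
  calc μ (U ∩ r ⁻¹' V)
      = ∫⁻ y, lam y (U ∩ r ⁻¹' V) ∂μ0 := hμ _ hW.measurableSet
    _ ≤ C * μ0 V := lintegral_measure_inter_preimage_le hconc hC μ0 hVopen.measurableSet
    _ < ⊤ := ENNReal.mul_lt_top ENNReal.coe_lt_top hVfin

/-- Lemma 2.2: the induced measure `μ(E) = ∫ λ^y(E) dμ0(y)` of a locally bounded
kernel concentrated on the fibers of a continuous map, against a locally finite
measure, is locally finite. -/
theorem stmt_2 {X Y : Type*}
    [TopologicalSpace X] [LocallyCompactSpace X] [T2Space X]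
    [MeasurableSpace X] [BorelSpace X]
    [TopologicalSpace Y] [MeasurableSpace Y] [BorelSpace Y]
    (r : X → Y) (hr : Continuous r)
    (lam : Kernel Y X)
    (hconc : ∀ y, lam y ((r ⁻¹' {y})ᶜ) = 0)
    (hlb : ∀ x : X, ∃ U : Set X, IsOpen U ∧ x ∈ U ∧
      ∃ C : ℝ≥0, 0 < C ∧ ∀ y, lam y U ≤ C)
    (μ0 : Measure Y) [IsLocallyFiniteMeasure μ0]
    (μ : Measure X)
    (hμ : ∀ E : Set X, MeasurableSet E → μ E = ∫⁻ y, lam y E ∂μ0) :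
    IsLocallyFiniteMeasure μ :=
  stmt_2_general r hr lam hconc hlb μ0 μ hμ
end

section
/- Let S, G, T be locally compact second countable Hausdorff spaces, S₀ and T₀ locally compact Hausdorff spaces, and r_S : S → S₀, r_T : T → T₀ continuous maps. Let (λ_S^s)_{s∈S₀} be a family of Borel measures on S, each finite on compact sets, with λ_S^s concentrated on r_S⁻¹{s} for every s, and such that for every continuous compactly supported f : S → ℝ the function s ↦ ∫_S f dλ_S^s is continuous on S₀; let (λ_T^t)_{t∈T₀} be a family of Borel measures on T with the analogous properties with respect to r_T. Then for every continuous compactly supported F : S × G × T → ℝ, the function (s, g, t) ↦ ∫_S ∫_T F(σ, g, τ) dλ_T^t(τ) dλ_S^s(σ) is continuous and compactly supported on S₀ × G × T₀. -/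
open MeasureTheory Filter Topology Set
open scoped ENNReal

/-!
Let `μ_b` (`b ∈ B`) be measures on `Y`, finite on compacts, with `b ↦ ∫ f dμ_b` continuous for
every `f ∈ C_c(Y)`, and with `μ_b` living on `r⁻¹{b}`. Then for `F ∈ C_c(X × Y)` the parametric
integral `(x, b) ↦ ∫ F(x, y) dμ_b(y)` lies in `C_c(X × B)`. Continuity: `F(x, ·) → F(x₀, ·)`
uniformly on a compact `K` carrying all slices, while `μ_b(K) ≤ ∫ φ dμ_b` for an Urysohn bump `φ`
stays bounded near `b₀`. Compact support: the integral vanishes unless `b = r y` for some `(x, y)`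
in the support of `F`. Applying this twice, first integrating out `τ` with parameter `(σ, g)` and
then `σ` with parameter `(g, t)`, gives the theorem.
-/

theorem norm_integral_le_of_forall_notMem_eq_zero {α E : Type*} [MeasurableSpace α]
    [NormedAddCommGroup E] [NormedSpace ℝ E] {ν : Measure α} {K : Set α} (hνK : ν K < ∞)
    {f : α → E} {δ : ℝ} (hf₀ : ∀ y ∉ K, f y = 0) (hfδ : ∀ y ∈ K, ‖f y‖ ≤ δ) :
    ‖∫ y, f y ∂ν‖ ≤ δ * ν.real K := by
  rw [← setIntegral_eq_integral_of_forall_compl_eq_zero hf₀]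
  exact norm_setIntegral_le_of_norm_le_const hνK hfδ

section ContinuousSystem

variable {X Y B E : Type*} [TopologicalSpace X] [TopologicalSpace Y] [TopologicalSpace B]
  [MeasurableSpace Y] [NormedAddCommGroup E] [NormedSpace ℝ E] {μ : B → Measure Y}

theorem isBoundedUnder_measureReal_of_continuous_integral [OpensMeasurableSpace Y] [T2Space Y]
    [LocallyCompactSpace Y] [∀ b, IsFiniteMeasureOnCompacts (μ b)]
    (hμ : ∀ f : Y → ℝ, Continuous f → HasCompactSupport f → Continuous fun b => ∫ y, f y ∂μ b)
    {K : Set Y} (hK : IsCompact K) (b₀ : B) :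
    IsBoundedUnder (· ≤ ·) (𝓝 b₀) fun b => (μ b).real K := by
  obtain ⟨φ, hφK, -, hφc, hφ01⟩ :=
    exists_continuous_one_zero_of_isCompact hK isClosed_empty (disjoint_empty K)
  have hKφ : ∀ b, (μ b).real K ≤ ∫ y, φ y ∂μ b := fun b => by
    rw [← integral_indicator_one hK.measurableSet]
    refine integral_mono ((integrable_indicator_iff hK.measurableSet).2
      (integrableOn_const hK.measure_lt_top.ne)) (φ.continuous.integrable_of_hasCompactSupport hφc)
      (indicator_le' (fun y hy => (hφK hy).ge) fun y _ => (hφ01 y).1)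
  obtain ⟨M, hM⟩ := ((hμ φ φ.continuous hφc).tendsto b₀).isBoundedUnder_le
  exact ⟨M, (eventually_map.1 hM).mono fun b hb => (hKφ b).trans hb⟩

theorem continuous_parametric_integral_of_continuous_integral [OpensMeasurableSpace Y]
    [T2Space Y] [LocallyCompactSpace Y] [∀ b, IsFiniteMeasureOnCompacts (μ b)]
    (hμ : ∀ f : Y → ℝ, Continuous f → HasCompactSupport f → Continuous fun b => ∫ y, f y ∂μ b)
    {F : X × Y → ℝ} (hF : Continuous F) {K : Set Y} (hK : IsCompact K)
    (hFK : ∀ x, ∀ y ∉ K, F (x, y) = 0) :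
    Continuous fun p : X × B => ∫ y, F (p.1, y) ∂μ p.2 := by
  have hslice : ∀ x, Continuous fun y => F (x, y) := fun x => by fun_prop
  have hslice_supp : ∀ x, HasCompactSupport fun y => F (x, y) := fun x =>
    HasCompactSupport.intro hK (hFK x)
  refine continuous_iff_continuousAt.2 fun ⟨x₀, b₀⟩ => Metric.continuousAt_iff'.2 fun ε hε => ?_
  obtain ⟨M, hM⟩ := isBoundedUnder_measureReal_of_continuous_integral hμ hK b₀
  obtain ⟨δ, hδ, hMδ⟩ := exists_pos_mul_lt (half_pos hε) M
  obtain ⟨v, hv, hvδ⟩ := hK.mem_uniformity_of_prod (f := fun x y => F (x, y)) hF.continuousOn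
    (mem_univ x₀) (Metric.dist_mem_uniformity hδ)
  have hx : ∀ᶠ p : X × B in 𝓝 (x₀, b₀), p.1 ∈ v :=
    continuousAt_fst.eventually (nhdsWithin_univ x₀ ▸ hv)
  replace hM : ∀ᶠ b in 𝓝 b₀, (μ b).real K ≤ M := hM
  have hb : ∀ᶠ p : X × B in 𝓝 (x₀, b₀), (μ p.2).real K ≤ M :=
    continuousAt_snd.eventually (p := fun b => (μ b).real K ≤ M) hM
  have hb' : ∀ᶠ p : X × B in 𝓝 (x₀, b₀),
      dist (∫ y, F (x₀, y) ∂μ p.2) (∫ y, F (x₀, y) ∂μ b₀) < ε / 2 :=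
    continuousAt_snd.eventually (Metric.continuousAt_iff'.1
      ((hμ _ (hslice x₀) (hslice_supp x₀)).continuousAt) _ (half_pos hε))
  filter_upwards [hx, hb, hb'] with ⟨x, b⟩ hxv hbM hbε
  have hxb : dist (∫ y, F (x, y) ∂μ b) (∫ y, F (x₀, y) ∂μ b) ≤ δ * M := by
    rw [dist_eq_norm, ← integral_sub ((hslice x).integrable_of_hasCompactSupport (hslice_supp x))
      ((hslice x₀).integrable_of_hasCompactSupport (hslice_supp x₀))]
    refine (norm_integral_le_of_forall_notMem_eq_zero hK.measure_lt_top
      (fun y hy => by simp [hFK _ y hy]) fun y hy => (hvδ x hxv y hy).le).trans ?_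
    exact mul_le_mul_of_nonneg_left hbM hδ.le
  calc dist (∫ y, F (x, y) ∂μ b) (∫ y, F (x₀, y) ∂μ b₀)
      ≤ dist (∫ y, F (x, y) ∂μ b) (∫ y, F (x₀, y) ∂μ b) +
        dist (∫ y, F (x₀, y) ∂μ b) (∫ y, F (x₀, y) ∂μ b₀) := dist_triangle _ _ _
    _ < ε / 2 + ε / 2 := by linarith [mul_comm M δ]
    _ = ε := add_halves ε

theorem hasCompactSupport_parametric_integral_of_ae_fiber [T2Space X] [T2Space B] {r : Y → B}
    (hr : Continuous r) (hμr : ∀ b, μ b (r ⁻¹' {b})ᶜ = 0) {F : X × Y → E}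
    (hF : HasCompactSupport F) :
    HasCompactSupport fun p : X × B => ∫ y, F (p.1, y) ∂μ p.2 := by
  refine HasCompactSupport.intro (hF.image (continuous_id.prodMap hr)) fun ⟨x, b⟩ hxb => ?_
  refine integral_eq_zero_of_ae ?_
  filter_upwards [measure_eq_zero_iff_ae_notMem.1 (hμr b)] with y hy
  by_contra hFxy
  exact hxb ⟨(x, y), subset_tsupport F hFxy, by simpa using hy⟩

theorem continuous_and_hasCompactSupport_parametric_integral [T2Space X] [T2Space B]
    [OpensMeasurableSpace Y] [T2Space Y] [LocallyCompactSpace Y]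
    [∀ b, IsFiniteMeasureOnCompacts (μ b)] {r : Y → B} (hr : Continuous r)
    (hμr : ∀ b, μ b (r ⁻¹' {b})ᶜ = 0)
    (hμ : ∀ f : Y → ℝ, Continuous f → HasCompactSupport f → Continuous fun b => ∫ y, f y ∂μ b)
    {F : X × Y → ℝ} (hF : Continuous F) (hFc : HasCompactSupport F) :
    (Continuous fun p : X × B => ∫ y, F (p.1, y) ∂μ p.2) ∧
      HasCompactSupport fun p : X × B => ∫ y, F (p.1, y) ∂μ p.2 :=
  ⟨continuous_parametric_integral_of_continuous_integral hμ hF (hFc.image continuous_snd)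
      fun x y hy => image_eq_zero_of_notMem_tsupport fun hxy => hy ⟨(x, y), hxy, rfl⟩,
    hasCompactSupport_parametric_integral_of_ae_fiber hr hμr hFc⟩

end ContinuousSystem

theorem stmt_5_general {S G T S₀ T₀ : Type*}
    [TopologicalSpace S] [LocallyCompactSpace S] [T2Space S]
    [MeasurableSpace S] [BorelSpace S]
    [TopologicalSpace G] [T2Space G]
    [TopologicalSpace T] [LocallyCompactSpace T] [T2Space T]
    [MeasurableSpace T] [BorelSpace T]
    [TopologicalSpace S₀] [T2Space S₀]
    [TopologicalSpace T₀] [T2Space T₀]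
    (rS : S → S₀) (rT : T → T₀) (hrS : Continuous rS) (hrT : Continuous rT)
    (lamS : S₀ → Measure S) (lamT : T₀ → Measure T)
    (hSfin : ∀ s, ∀ K : Set S, IsCompact K → lamS s K < ∞)
    (hTfin : ∀ t, ∀ K : Set T, IsCompact K → lamT t K < ∞)
    (hSconc : ∀ s, lamS s ((rS ⁻¹' {s})ᶜ) = 0)
    (hTconc : ∀ t, lamT t ((rT ⁻¹' {t})ᶜ) = 0)
    (hScont : ∀ f : S → ℝ, Continuous f → HasCompactSupport f →
      Continuous fun s => ∫ σ, f σ ∂lamS s)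
    (hTcont : ∀ f : T → ℝ, Continuous f → HasCompactSupport f →
      Continuous fun t => ∫ τ, f τ ∂lamT t)
    (F : S × G × T → ℝ) (hF : Continuous F) (hFc : HasCompactSupport F) :
    Continuous (fun x : S₀ × G × T₀ =>
      ∫ σ, ∫ τ, F (σ, x.2.1, τ) ∂lamT x.2.2 ∂lamS x.1) ∧
    HasCompactSupport (fun x : S₀ × G × T₀ =>
      ∫ σ, ∫ τ, F (σ, x.2.1, τ) ∂lamT x.2.2 ∂lamS x.1) := by
  have : ∀ s, IsFiniteMeasureOnCompacts (lamS s) := fun s => ⟨hSfin s⟩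
  have : ∀ t, IsFiniteMeasureOnCompacts (lamT t) := fun t => ⟨hTfin t⟩
  obtain ⟨hH, hHc⟩ := continuous_and_hasCompactSupport_parametric_integral hrT hTconc hTcont
    (hF.comp (Homeomorph.prodAssoc S G T).continuous)
    (hFc.comp_homeomorph (Homeomorph.prodAssoc S G T))
  let e : (G × T₀) × S ≃ₜ (S × G) × T₀ :=
    (Homeomorph.prodComm _ _).trans (Homeomorph.prodAssoc _ _ _).symm
  obtain ⟨hI, hIc⟩ := continuous_and_hasCompactSupport_parametric_integral hrS hSconc hScont
    (hH.comp e.continuous) (hHc.comp_homeomorph e)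
  exact ⟨hI.comp (Homeomorph.prodComm _ _).continuous,
    hIc.comp_homeomorph (Homeomorph.prodComm _ _)⟩

/-- Proposition 4.3: continuity and compact support of the iterated integral of a
continuous compactly supported function on `S × G × T` against the continuous
systems of measures `λ_S` and `λ_T`. -/
theorem stmt_5 {S G T S₀ T₀ : Type*}
    [TopologicalSpace S] [LocallyCompactSpace S] [SecondCountableTopology S] [T2Space S]
    [MeasurableSpace S] [BorelSpace S]
    [TopologicalSpace G] [LocallyCompactSpace G] [SecondCountableTopology G] [T2Space G]
    [TopologicalSpace T] [LocallyCompactSpace T] [SecondCountableTopology T] [T2Space T]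
    [MeasurableSpace T] [BorelSpace T]
    [TopologicalSpace S₀] [LocallyCompactSpace S₀] [T2Space S₀]
    [TopologicalSpace T₀] [LocallyCompactSpace T₀] [T2Space T₀]
    (rS : S → S₀) (rT : T → T₀) (hrS : Continuous rS) (hrT : Continuous rT)
    (lamS : S₀ → Measure S) (lamT : T₀ → Measure T)
    (hSfin : ∀ s, ∀ K : Set S, IsCompact K → lamS s K < ∞)
    (hTfin : ∀ t, ∀ K : Set T, IsCompact K → lamT t K < ∞)
    (hSconc : ∀ s, lamS s ((rS ⁻¹' {s})ᶜ) = 0)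
    (hTconc : ∀ t, lamT t ((rT ⁻¹' {t})ᶜ) = 0)
    (hScont : ∀ f : S → ℝ, Continuous f → HasCompactSupport f →
      Continuous fun s => ∫ σ, f σ ∂lamS s)
    (hTcont : ∀ f : T → ℝ, Continuous f → HasCompactSupport f →
      Continuous fun t => ∫ τ, f τ ∂lamT t)
    (F : S × G × T → ℝ) (hF : Continuous F) (hFc : HasCompactSupport F) :
    Continuous (fun x : S₀ × G × T₀ =>
      ∫ σ, ∫ τ, F (σ, x.2.1, τ) ∂lamT x.2.2 ∂lamS x.1) ∧
    HasCompactSupport (fun x : S₀ × G × T₀ =>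
      ∫ σ, ∫ τ, F (σ, x.2.1, τ) ∂lamT x.2.2 ∂lamS x.1) :=
  stmt_5_general rS rT hrS hrT lamS lamT hSfin hTfin hSconc hTconc hScont hTcont F hF hFc
end

section
/- Let S₀, T₀, G be topological spaces and G₀ a second countable Hausdorff topological space, all with their Borel σ-algebras, and p : S₀ → G₀, q : T₀ → G₀, r, d : G → G₀ Borel maps with r and d continuous. Let γ_p (from G₀ to S₀) and γ_q (from G₀ to T₀) be s-finite kernels that are locally bounded (every point of S₀, resp. T₀, has an open neighborhood U and a constant C such that the kernel measure of U is at most C for every parameter u ∈ G₀), with γ_p^u concentrated on p⁻¹{u} and γ_q^u concentrated on q⁻¹{u} for all u. Let μ_G be a locally finite Borel measure on G. Then the measure μ_P⁰ on S₀ × G × T₀ defined by μ_P⁰(E) = ∫_G (γ_p^{r(x)} ⊗ δ_x ⊗ γ_q^{d(x)})(E) dμ_G(x) is locally finite. -/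
open MeasureTheory ProbabilityTheory Set
open scoped ENNReal NNReal

/-- Proposition 5.5: the measure `μ_P⁰(E) = ∫_G (γ_p^{r(x)} ⊗ δ_x ⊗ γ_q^{d(x)})(E) dμ_G(x)`
is locally finite when `γ_p`, `γ_q` are locally bounded kernels concentrated on the
fibers of `p`, `q` and `μ_G` is locally finite. -/
theorem stmt_9 {S₀ T₀ G G₀ : Type*}
    [TopologicalSpace S₀] [MeasurableSpace S₀] [BorelSpace S₀]
    [TopologicalSpace T₀] [MeasurableSpace T₀] [BorelSpace T₀]
    [TopologicalSpace G] [MeasurableSpace G] [BorelSpace G]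
    [TopologicalSpace G₀] [SecondCountableTopology G₀] [T2Space G₀]
    [MeasurableSpace G₀] [BorelSpace G₀]
    (p : S₀ → G₀) (q : T₀ → G₀) (r d : G → G₀)
    (hp : Measurable p) (hq : Measurable q) (hr : Continuous r) (hd : Continuous d)
    (γp : Kernel G₀ S₀) (γq : Kernel G₀ T₀)
    [IsSFiniteKernel γp] [IsSFiniteKernel γq]
    (hγp : ∀ u, γp u ((p ⁻¹' {u})ᶜ) = 0) (hγq : ∀ u, γq u ((q ⁻¹' {u})ᶜ) = 0)
    (hγplb : ∀ s : S₀, ∃ U : Set S₀, IsOpen U ∧ s ∈ U ∧ ∃ C : ℝ≥0, ∀ u, γp u U ≤ C)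
    (hγqlb : ∀ t : T₀, ∃ U : Set T₀, IsOpen U ∧ t ∈ U ∧ ∃ C : ℝ≥0, ∀ u, γq u U ≤ C)
    (μG : Measure G) [IsLocallyFiniteMeasure μG]
    (μP0 : Measure (S₀ × G × T₀))
    (hμP0 : ∀ E : Set (S₀ × G × T₀), MeasurableSet E →
      μP0 E = ∫⁻ x, ((γp (r x)).prod ((Measure.dirac x).prod (γq (d x)))) E ∂μG) :
    IsLocallyFiniteMeasure μP0 := by
  refine ⟨fun z => ?_⟩
  obtain ⟨s, x, t⟩ := z
  obtain ⟨U, hUo, hsU, Cp, hCp⟩ := hγplb s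
  obtain ⟨V, hVo, htV, Cq, hCq⟩ := hγqlb t
  obtain ⟨W, hWmem, hWfin⟩ := μG.finiteAt_nhds x
  obtain ⟨W', hW'sub, hW'o, hxW'⟩ := mem_nhds_iff.mp hWmem
  refine ⟨U ×ˢ W' ×ˢ V, prod_mem_nhds (hUo.mem_nhds hsU)
    (prod_mem_nhds (hW'o.mem_nhds hxW') (hVo.mem_nhds htV)), ?_⟩
  rw [hμP0 _ (hUo.measurableSet.prod (hW'o.measurableSet.prod hVo.measurableSet))]
  have hbound : ∀ y : G,
      ((γp (r y)).prod ((Measure.dirac y).prod (γq (d y)))) (U ×ˢ W' ×ˢ V)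
        ≤ W'.indicator (fun _ => (Cp : ℝ≥0∞) * Cq) y := by
    intro y
    rw [Measure.prod_prod, Measure.prod_prod,
      Measure.dirac_apply' _ hW'o.measurableSet]
    by_cases hy : y ∈ W'
    · rw [indicator_of_mem hy, indicator_of_mem hy, Pi.one_apply, one_mul]
      exact mul_le_mul' (hCp _) (hCq _)
    · rw [indicator_of_notMem hy, zero_mul, mul_zero]
      exact zero_le
  calc ∫⁻ y, ((γp (r y)).prod ((Measure.dirac y).prod (γq (d y)))) (U ×ˢ W' ×ˢ V) ∂μG
      ≤ ∫⁻ y, W'.indicator (fun _ => (Cp : ℝ≥0∞) * Cq) y ∂μG := lintegral_mono hbound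
    _ = (Cp : ℝ≥0∞) * Cq * μG W' := by
        rw [lintegral_indicator hW'o.measurableSet, setLIntegral_const]
    _ ≤ (Cp : ℝ≥0∞) * Cq * μG W := by
        exact mul_le_mul_right (measure_mono hW'sub) _
    _ < ∞ := ENNReal.mul_lt_top
        (ENNReal.mul_lt_top ENNReal.coe_lt_top ENNReal.coe_lt_top) hWfin
end

section
/- Let S, S₀, G, G₀ be measurable spaces with measurable maps r_S : S → S₀, p : S₀ → G₀ and r_G : G → G₀. Let λ_S be an s-finite kernel from S₀ to S with λ_S^s concentrated on r_S⁻¹{s} for every s; let γ_p be an s-finite kernel from G₀ to S₀ with γ_p^u concentrated on p⁻¹{u} for every u; and let λ_G be an s-finite kernel from G₀ to G with λ_G^u concentrated on r_G⁻¹{u} for every u. Then for every measurable function f : G × S → [0, ∞] and every u ∈ G₀: ∫_{S₀} ∫_S ∫_G f(y, σ) dλ_G^{p(r_S(σ))}(y) dλ_S^s(σ) dγ_p^u(s) = ∫_G ∫_{S₀} ∫_S f(y, σ) dλ_S^s(σ) dγ_p^{r_G(y)}(s) dλ_G^u(y). -/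
/-!
Because the kernels are concentrated on fibres, `p (rS σ) = u` for almost every `σ` on the left
and `rG y = u` for almost every `y` on the right. Both sides are therefore iterated integrals of
`f` against the fixed measures `lamG u` and `(lamS ∘ₖ γp) u`, taken in opposite orders, and
Tonelli's theorem identifies them.
-/

open MeasureTheory ProbabilityTheory
open scoped ENNReal

theorem lintegral_congr_of_ae_eq_const {α β : Type*} [MeasurableSpace α] {μ : Measure α}
    {r : α → β} {b : β} (hr : ∀ᵐ x ∂μ, r x = b) (h : β → α → ℝ≥0∞) :
    ∫⁻ x, h (r x) x ∂μ = ∫⁻ x, h b x ∂μ :=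
  lintegral_congr_ae (hr.mono fun x hx => congrArg (h · x) hx)

namespace ProbabilityTheory.Kernel

theorem lintegral_lintegral_fiberwise_eq_lintegral_comp {α β γ : Type*} [MeasurableSpace α]
    [MeasurableSpace β] [MeasurableSpace γ] (η : Kernel β γ) (κ : Kernel α β) {r : γ → β} {q : β → α}
    (hr : ∀ b, ∀ᵐ c ∂η b, r c = b) (hq : ∀ a, ∀ᵐ b ∂κ a, q b = a)
    {g : α → γ → ℝ≥0∞} (a : α) (hg : Measurable (g a)) :
    ∫⁻ b, ∫⁻ c, g (q (r c)) c ∂η b ∂κ a = ∫⁻ c, g a c ∂(η ∘ₖ κ) a :=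
  calc ∫⁻ b, ∫⁻ c, g (q (r c)) c ∂η b ∂κ a
      = ∫⁻ b, ∫⁻ c, g (q b) c ∂η b ∂κ a :=
        lintegral_congr fun b => lintegral_congr_of_ae_eq_const (hr b) fun b' c => g (q b') c
    _ = ∫⁻ b, ∫⁻ c, g a c ∂η b ∂κ a :=
        lintegral_congr_of_ae_eq_const (hq a) fun a' b => ∫⁻ c, g a' c ∂η b
    _ = ∫⁻ c, g a c ∂(η ∘ₖ κ) a := (lintegral_comp η κ a hg).symm

end ProbabilityTheory.Kernel

theorem stmt_11_general {S S₀ G G₀ : Type*}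
    [MeasurableSpace S] [MeasurableSpace S₀] [MeasurableSpace G] [MeasurableSpace G₀]
    (rS : S → S₀) (p : S₀ → G₀) (rG : G → G₀)
    (lamS : Kernel S₀ S) [IsSFiniteKernel lamS]
    (hlamS : ∀ s, lamS s ((rS ⁻¹' {s})ᶜ) = 0)
    (γp : Kernel G₀ S₀) [IsSFiniteKernel γp]
    (hγp : ∀ u, γp u ((p ⁻¹' {u})ᶜ) = 0)
    (lamG : Kernel G₀ G) [IsSFiniteKernel lamG]
    (hlamG : ∀ u, lamG u ((rG ⁻¹' {u})ᶜ) = 0)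
    (f : G × S → ℝ≥0∞) (hf : Measurable f) (u : G₀) :
    ∫⁻ s, ∫⁻ σ, ∫⁻ y, f (y, σ) ∂lamG (p (rS σ)) ∂lamS s ∂γp u
      = ∫⁻ y, ∫⁻ s, ∫⁻ σ, f (y, σ) ∂lamS s ∂γp (rG y) ∂lamG u := by
  rw [Kernel.lintegral_lintegral_fiberwise_eq_lintegral_comp lamS γp
      (fun s => ae_iff.2 (hlamS s)) (fun v => ae_iff.2 (hγp v))
      (g := fun v σ => ∫⁻ y, f (y, σ) ∂lamG v) u (by fun_prop),
    lintegral_congr_of_ae_eq_const (ae_iff.2 (hlamG u))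
      fun v y => ∫⁻ s, ∫⁻ σ, f (y, σ) ∂lamS s ∂γp v,
    lintegral_lintegral_swap (by fun_prop)]
  exact lintegral_congr fun y => Kernel.lintegral_comp lamS γp u (by fun_prop)

/-- Lemma 5.8 (commuting triple integrals). -/
theorem stmt_11 {S S₀ G G₀ : Type*}
    [MeasurableSpace S] [MeasurableSpace S₀] [MeasurableSpace G] [MeasurableSpace G₀]
    (rS : S → S₀) (p : S₀ → G₀) (rG : G → G₀)
    (hrS : Measurable rS) (hp : Measurable p) (hrG : Measurable rG)
    (lamS : Kernel S₀ S) [IsSFiniteKernel lamS]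
    (hlamS : ∀ s, lamS s ((rS ⁻¹' {s})ᶜ) = 0)
    (γp : Kernel G₀ S₀) [IsSFiniteKernel γp]
    (hγp : ∀ u, γp u ((p ⁻¹' {u})ᶜ) = 0)
    (lamG : Kernel G₀ G) [IsSFiniteKernel lamG]
    (hlamG : ∀ u, lamG u ((rG ⁻¹' {u})ᶜ) = 0)
    (f : G × S → ℝ≥0∞) (hf : Measurable f) (u : G₀) :
    ∫⁻ s, ∫⁻ σ, ∫⁻ y, f (y, σ) ∂lamG (p (rS σ)) ∂lamS s ∂γp u
      = ∫⁻ y, ∫⁻ s, ∫⁻ σ, f (y, σ) ∂lamS s ∂γp (rG y) ∂lamG u :=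
  stmt_11_general rS p rG lamS hlamS γp hγp lamG hlamG f hf u
end

section
/- In the setting of measurable spaces S, S₀, T, T₀, G, G₀ with measurable maps r_S : S → S₀, r_T : T → T₀, r, d : G → G₀, p : S₀ → G₀, q : T₀ → G₀, and s-finite kernels λ_S, λ_T, λ_G, γ_p, γ_q concentrated respectively on the fibers of r_S, r_T, r, p, q, let μ_G⁰ be a measure on G₀ and define μ_G = ∫ λ_G^u dμ_G⁰(u), μ_P⁰ = ∫_G (γ_p^{r(x)} ⊗ δ_x ⊗ γ_q^{d(x)}) dμ_G(x), μ_P = ∫ (λ_S^s ⊗ δ_g ⊗ λ_T^t) dμ_P⁰(s,g,t), μ_S⁰ = ∫ γ_p^u dμ_G⁰(u) and μ_S = ∫ λ_S^s dμ_S⁰(s). Assume moreover that λ_T^t(T) > 0 for every t ∈ T₀, γ_q^v(T₀) > 0 for every v ∈ G₀, and λ_G^u(G) > 0 for every u ∈ G₀. Then the pushforward of μ_P under the projection π_S : S × G × T → S, π_S(σ, x, τ) = σ, is mutually absolutely continuous with μ_S. -/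
open MeasureTheory ProbabilityTheory
open scoped ENNReal

/-!
Both measures are images of measures on `G₀` under the kernel `λ_S ∘ γ_p`: `μ_S` of `μ_G⁰`, and
`(π_S)_* μ_P` of `μ_G⁰` with density `W u = ∫∫ λ_T^t(T) dγ_q^{d x}(t) dλ_G^u(x)`. Indeed the
`G`- and `T`-coordinates of `μ_P` only contribute their total mass, and since `λ_G^u` lives on
`r⁻¹{u}`, the `S`-factor `(λ_S ∘ γ_p)^{r x}(E)` is the constant `(λ_S ∘ γ_p)^u(E)` there.
The positivity hypotheses make `W > 0` everywhere, so `μ_G⁰.withDensity W ∼ μ_G⁰`, and composing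
with a kernel preserves `≪`.
-/

namespace MeasureTheory.Measure

variable {α β γ : Type*} [MeasurableSpace α]

theorem lintegral_comp_mul_of_ae_eq_const {μ : Measure α} {f : α → β} {b : β}
    (hf : ∀ᵐ a ∂μ, f a = b) (F : β → ℝ≥0∞) {g : α → ℝ≥0∞} (hg : Measurable g) :
    ∫⁻ a, F (f a) * g a ∂μ = F b * ∫⁻ a, g a ∂μ := by
  rw [← lintegral_const_mul _ hg]
  refine lintegral_congr_ae ?_
  filter_upwards [hf] with a ha
  rw [ha]

variable [MeasurableSpace β] [MeasurableSpace γ]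

theorem eq_comp_of_apply_eq_lintegral {μ : Measure β} {ν : Measure α} {κ : Kernel α β}
    (h : ∀ E, MeasurableSet E → μ E = ∫⁻ a, κ a E ∂ν) : μ = κ ∘ₘ ν := by
  ext E hE
  rw [h E hE, bind_apply hE κ.aemeasurable]

theorem lintegral_prod_dirac_prod_mul (μ : Measure α) (x : β) (ν : Measure γ) [SFinite ν]
    {f : α → ℝ≥0∞} {g : γ → ℝ≥0∞} (hf : Measurable f) (hg : Measurable g) :
    ∫⁻ w, f w.1 * g w.2.2 ∂μ.prod ((dirac x).prod ν) = (∫⁻ a, f a ∂μ) * ∫⁻ c, g c ∂ν := by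
  have hg' : Measurable fun y : β × γ => g y.2 := hg.comp measurable_snd
  rw [lintegral_prod_mul hf.aemeasurable hg'.aemeasurable, dirac_prod,
    lintegral_map hg' measurable_prodMk_left]

theorem prod_dirac_prod_prod_univ (μ : Measure α) (x : β) (ν : Measure γ) [SFinite ν]
    (E : Set α) : μ.prod ((dirac x).prod ν) (E ×ˢ Set.univ) = μ E * ν Set.univ := by
  rw [← Set.univ_prod_univ, prod_prod, prod_prod, measure_univ, one_mul]

end MeasureTheory.Measure

namespace ProbabilityTheory.Kernel

variable {α β γ : Type*} [MeasurableSpace α] [MeasurableSpace β] [MeasurableSpace γ]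

theorem comp_apply_univ_pos {η : Kernel β γ} {κ : Kernel α β} (hη : ∀ b, 0 < η b Set.univ)
    (hκ : ∀ a, 0 < κ a Set.univ) (a : α) : 0 < (η ∘ₖ κ) a Set.univ := by
  rw [comp_apply' _ _ _ MeasurableSet.univ, lintegral_pos_iff_support (η.measurable_coe .univ),
    Function.support_eq_univ fun b => (hη b).ne']
  exact hκ a

end ProbabilityTheory.Kernel

section WeakPullback

open Measure

variable {S T S₀ T₀ G G₀ : Type*} [MeasurableSpace S] [MeasurableSpace T] [MeasurableSpace S₀]
  [MeasurableSpace T₀] [MeasurableSpace G] [MeasurableSpace G₀] {r d : G → G₀}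

noncomputable def weakPullbackKernel (γp : Kernel G₀ S₀) (γq : Kernel G₀ T₀)
    [IsSFiniteKernel γp] [IsSFiniteKernel γq] (hr : Measurable r) (hd : Measurable d) :
    Kernel G (S₀ × G × T₀) :=
  γp.comap r hr ×ₖ (Kernel.id ×ₖ γq.comap d hd)

theorem weakPullbackKernel_apply (γp : Kernel G₀ S₀) (γq : Kernel G₀ T₀)
    [IsSFiniteKernel γp] [IsSFiniteKernel γq] (hr : Measurable r) (hd : Measurable d) (x : G) :
    weakPullbackKernel γp γq hr hd x = (γp (r x)).prod ((dirac x).prod (γq (d x))) := by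
  rw [weakPullbackKernel, Kernel.prod_apply, Kernel.prod_apply, Kernel.comap_apply,
    Kernel.comap_apply, Kernel.id_apply]

theorem lintegral_fst_mul_snd_snd_of_weakPullback {γp : Kernel G₀ S₀} {γq : Kernel G₀ T₀}
    [IsSFiniteKernel γp] [IsSFiniteKernel γq] (hr : Measurable r) (hd : Measurable d)
    {μG : Measure G} {μP0 : Measure (S₀ × G × T₀)}
    (hμP0 : ∀ E : Set (S₀ × G × T₀), MeasurableSet E →
      μP0 E = ∫⁻ x, ((γp (r x)).prod ((dirac x).prod (γq (d x)))) E ∂μG)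
    {f : S₀ → ℝ≥0∞} {g : T₀ → ℝ≥0∞} (hf : Measurable f) (hg : Measurable g) :
    ∫⁻ w, f w.1 * g w.2.2 ∂μP0 =
      ∫⁻ x, (∫⁻ s, f s ∂γp (r x)) * ∫⁻ t, g t ∂γq (d x) ∂μG := by
  have hμP0_eq : μP0 = weakPullbackKernel γp γq hr hd ∘ₘ μG :=
    eq_comp_of_apply_eq_lintegral fun E hE => by simp_rw [weakPullbackKernel_apply, hμP0 E hE]
  rw [hμP0_eq, lintegral_bind (Kernel.aemeasurable _) (by fun_prop)]
  simp_rw [weakPullbackKernel_apply, lintegral_prod_dirac_prod_mul _ _ _ hf hg]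

theorem map_fst_eq_comp_withDensity {lamS : Kernel S₀ S} {lamT : Kernel T₀ T}
    {lamG : Kernel G₀ G} {γp : Kernel G₀ S₀} {γq : Kernel G₀ T₀}
    [IsSFiniteKernel lamT] [IsSFiniteKernel γp] [IsSFiniteKernel γq]
    (hr : Measurable r) (hd : Measurable d) (hlamG : ∀ u, lamG u ((r ⁻¹' {u})ᶜ) = 0)
    {μG0 : Measure G₀} {μG : Measure G} {μP0 : Measure (S₀ × G × T₀)} {μP : Measure (S × G × T)}
    (hμG : ∀ E : Set G, MeasurableSet E → μG E = ∫⁻ u, lamG u E ∂μG0)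
    (hμP0 : ∀ E : Set (S₀ × G × T₀), MeasurableSet E →
      μP0 E = ∫⁻ x, ((γp (r x)).prod ((dirac x).prod (γq (d x)))) E ∂μG)
    (hμP : ∀ E : Set (S × G × T), MeasurableSet E →
      μP E = ∫⁻ w, ((lamS w.1).prod ((dirac w.2.1).prod (lamT w.2.2))) E ∂μP0) :
    μP.map (fun z : S × G × T => z.1) = (lamS ∘ₖ γp) ∘ₘ
      μG0.withDensity fun u => ((lamT ∘ₖ γq).comap d hd ∘ₖ lamG) u Set.univ := by
  ext E hE
  have hlamSE : Measurable fun s => lamS s E := lamS.measurable_coe hE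
  have hlamT : Measurable fun t => lamT t Set.univ := lamT.measurable_coe .univ
  calc μP.map (fun z : S × G × T => z.1) E
      = ∫⁻ w, lamS w.1 E * lamT w.2.2 Set.univ ∂μP0 := by
        rw [map_apply measurable_fst hE, ← Set.prod_univ, hμP _ (hE.prod .univ)]
        simp_rw [prod_dirac_prod_prod_univ]
    _ = ∫⁻ x, (lamS ∘ₖ γp) (r x) E * (lamT ∘ₖ γq) (d x) Set.univ ∂μG := by
        simp_rw [lintegral_fst_mul_snd_snd_of_weakPullback hr hd hμP0 hlamSE hlamT,
          Kernel.comp_apply' _ _ _ hE, Kernel.comp_apply' _ _ _ MeasurableSet.univ]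
    _ = ∫⁻ u, (lamS ∘ₖ γp) u E * ((lamT ∘ₖ γq).comap d hd ∘ₖ lamG) u Set.univ ∂μG0 := by
        have hF : Measurable fun x => (lamS ∘ₖ γp) (r x) E :=
          (Kernel.measurable_coe _ hE).comp hr
        have hw0 : Measurable fun x => (lamT ∘ₖ γq) (d x) Set.univ :=
          (Kernel.measurable_coe _ .univ).comp hd
        rw [eq_comp_of_apply_eq_lintegral hμG, lintegral_bind (Kernel.aemeasurable _)
          (by exact (hF.mul hw0).aemeasurable)]
        refine lintegral_congr fun u => ?_
        rw [lintegral_comp_mul_of_ae_eq_const (ae_iff.2 (hlamG u))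
          (fun v => (lamS ∘ₖ γp) v E) hw0, Kernel.comp_apply' _ _ _ .univ]
        rfl
    _ = ((lamS ∘ₖ γp) ∘ₘ μG0.withDensity fun u =>
          ((lamT ∘ₖ γq).comap d hd ∘ₖ lamG) u Set.univ) E := by
        rw [bind_apply hE (Kernel.aemeasurable _), lintegral_withDensity_eq_lintegral_mul _
          (Kernel.measurable_coe _ .univ) (Kernel.measurable_coe _ hE)]
        simp_rw [Pi.mul_apply, mul_comm]

end WeakPullback

theorem stmt_13_general {S S₀ T T₀ G G₀ : Type*}
    [MeasurableSpace S] [MeasurableSpace S₀] [MeasurableSpace T] [MeasurableSpace T₀]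
    [MeasurableSpace G] [MeasurableSpace G₀]
    (r d : G → G₀) (hr : Measurable r) (hd : Measurable d)
    (lamS : Kernel S₀ S) (lamT : Kernel T₀ T) (lamG : Kernel G₀ G)
    (γp : Kernel G₀ S₀) (γq : Kernel G₀ T₀)
    [IsSFiniteKernel lamT] [IsSFiniteKernel γp] [IsSFiniteKernel γq]
    (hlamG : ∀ u, lamG u ((r ⁻¹' {u})ᶜ) = 0)
    (μG0 : Measure G₀) (μG : Measure G)
    (μP0 : Measure (S₀ × G × T₀)) (μP : Measure (S × G × T))
    (μS0 : Measure S₀) (μS : Measure S)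
    (hμG : ∀ E : Set G, MeasurableSet E → μG E = ∫⁻ u, lamG u E ∂μG0)
    (hμP0 : ∀ E : Set (S₀ × G × T₀), MeasurableSet E →
      μP0 E = ∫⁻ x, ((γp (r x)).prod ((Measure.dirac x).prod (γq (d x)))) E ∂μG)
    (hμP : ∀ E : Set (S × G × T), MeasurableSet E →
      μP E = ∫⁻ w, ((lamS w.1).prod ((Measure.dirac w.2.1).prod (lamT w.2.2))) E ∂μP0)
    (hμS0 : ∀ E : Set S₀, MeasurableSet E → μS0 E = ∫⁻ u, γp u E ∂μG0)
    (hμS : ∀ E : Set S, MeasurableSet E → μS E = ∫⁻ s, lamS s E ∂μS0)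
    (hTpos : ∀ t, 0 < lamT t Set.univ)
    (hγqpos : ∀ v, 0 < γq v Set.univ)
    (hGpos : ∀ u, 0 < lamG u Set.univ) :
    μP.map (fun z : S × G × T => z.1) ≪ μS ∧
    μS ≪ μP.map (fun z : S × G × T => z.1) := by
  have hμS_eq : μS = (lamS ∘ₖ γp) ∘ₘ μG0 := by
    rw [Measure.eq_comp_of_apply_eq_lintegral hμS,
      Measure.eq_comp_of_apply_eq_lintegral hμS0, Measure.comp_assoc]
  have hW : ∀ u, 0 < ((lamT ∘ₖ γq).comap d hd ∘ₖ lamG) u Set.univ :=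
    Kernel.comp_apply_univ_pos (fun x => Kernel.comp_apply_univ_pos hTpos hγqpos (d x)) hGpos
  rw [map_fst_eq_comp_withDensity hr hd hlamG hμG hμP0 hμP, hμS_eq]
  exact ⟨(withDensity_absolutelyContinuous _ _).comp_right _,
    (withDensity_absolutelyContinuous' (Kernel.measurable_coe _ .univ).aemeasurable
      (.of_forall fun u => (hW u).ne')).comp_right _⟩

/-- Proposition 6.2 (π_S-half): the projection `π_S : P → S` of the weak pullback
is measure class preserving, `(π_S)_*(μ_P) ∼ μ_S`. -/
theorem stmt_13 {S S₀ T T₀ G G₀ : Type*}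
    [MeasurableSpace S] [MeasurableSpace S₀] [MeasurableSpace T] [MeasurableSpace T₀]
    [MeasurableSpace G] [MeasurableSpace G₀]
    (rS : S → S₀) (rT : T → T₀) (r d : G → G₀) (p : S₀ → G₀) (q : T₀ → G₀)
    (hrS : Measurable rS) (hrT : Measurable rT) (hr : Measurable r) (hd : Measurable d)
    (hp : Measurable p) (hq : Measurable q)
    (lamS : Kernel S₀ S) (lamT : Kernel T₀ T) (lamG : Kernel G₀ G)
    (γp : Kernel G₀ S₀) (γq : Kernel G₀ T₀)
    [IsSFiniteKernel lamS] [IsSFiniteKernel lamT] [IsSFiniteKernel lamG]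
    [IsSFiniteKernel γp] [IsSFiniteKernel γq]
    (hlamS : ∀ s, lamS s ((rS ⁻¹' {s})ᶜ) = 0)
    (hlamT : ∀ t, lamT t ((rT ⁻¹' {t})ᶜ) = 0)
    (hlamG : ∀ u, lamG u ((r ⁻¹' {u})ᶜ) = 0)
    (hγp : ∀ u, γp u ((p ⁻¹' {u})ᶜ) = 0)
    (hγq : ∀ u, γq u ((q ⁻¹' {u})ᶜ) = 0)
    (μG0 : Measure G₀) (μG : Measure G)
    (μP0 : Measure (S₀ × G × T₀)) (μP : Measure (S × G × T))
    (μS0 : Measure S₀) (μS : Measure S)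
    (hμG : ∀ E : Set G, MeasurableSet E → μG E = ∫⁻ u, lamG u E ∂μG0)
    (hμP0 : ∀ E : Set (S₀ × G × T₀), MeasurableSet E →
      μP0 E = ∫⁻ x, ((γp (r x)).prod ((Measure.dirac x).prod (γq (d x)))) E ∂μG)
    (hμP : ∀ E : Set (S × G × T), MeasurableSet E →
      μP E = ∫⁻ w, ((lamS w.1).prod ((Measure.dirac w.2.1).prod (lamT w.2.2))) E ∂μP0)
    (hμS0 : ∀ E : Set S₀, MeasurableSet E → μS0 E = ∫⁻ u, γp u E ∂μG0)
    (hμS : ∀ E : Set S, MeasurableSet E → μS E = ∫⁻ s, lamS s E ∂μS0)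
    (hTpos : ∀ t, 0 < lamT t Set.univ)
    (hγqpos : ∀ v, 0 < γq v Set.univ)
    (hGpos : ∀ u, 0 < lamG u Set.univ) :
    μP.map (fun z : S × G × T => z.1) ≪ μS ∧
    μS ≪ μP.map (fun z : S × G × T => z.1) :=
  stmt_13_general r d hr hd lamS lamT lamG γp γq hlamG μG0 μG μP0 μP μS0 μS hμG hμP0 hμP hμS0 hμS
    hTpos hγqpos hGpos
end

section
/- Let S₀, T₀, G, G₀ be topological spaces with their Borel σ-algebras and Borel maps p : S₀ → G₀, q : T₀ → G₀, r, d : G → G₀. Let γ_p (from G₀ to S₀), γ_q (from G₀ to T₀) and λ_G (from G₀ to G) be s-finite kernels, with γ_p^u concentrated on p⁻¹{u}, γ_q^u concentrated on q⁻¹{u} and λ_G^u concentrated on r⁻¹{u} for every u, and with γ_q and λ_G locally bounded (every point of the target space has an open neighborhood U and a constant C such that the kernel measure of U is at most C for all parameters u ∈ G₀). Let μ_G⁰ be a measure on G₀ and set μ_G = ∫ λ_G^u dμ_G⁰(u), μ_S⁰ = ∫ γ_p^u dμ_G⁰(u), and μ_P⁰(E) = ∫_G (γ_p^{r(x)} ⊗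 δ_x ⊗ γ_q^{d(x)})(E) dμ_G(x) on S₀ × G × T₀. Then for every compact set K ⊆ S₀ × G × T₀ there exists a constant C_K ≥ 0 such that for every Borel set Σ ⊆ S₀: μ_P⁰(K ∩ (Σ × G × T₀)) ≤ C_K · μ_S⁰(Σ). -/
open MeasureTheory ProbabilityTheory Set
open scoped ENNReal NNReal

/-!
On a box `A ×ˢ V ×ˢ W` the measure `γp^{r x} ⊗ δ_x ⊗ γq^{d x}` is `γp^{r x}(A) · 1_V(x) · γq^{d x}(W)`.
By compactness and local boundedness, `K ∩ π_S⁻¹(A)` lies in such a box with `λ_G^u(V) ≤ C_λ` and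
`γq^u(W) ≤ C_q` for all `u`. Integrating against `μ_G = ∫ λ_G^u dμ_G⁰(u)`, where `λ_G^u` lives on
`r⁻¹{u}` so that `γp^{r x}(A) = γp^u(A)`, bounds its measure by
`C_λ C_q ∫ γp^u(A) dμ_G⁰(u) = C_λ C_q μ_S⁰(A)`.
-/

namespace ProbabilityTheory.Kernel

variable {α X : Type*} [MeasurableSpace α] [MeasurableSpace X] [TopologicalSpace X]

def IsLocallyBounded (κ : Kernel α X) : Prop :=
  ∀ x : X, ∃ U : Set X, IsOpen U ∧ x ∈ U ∧ ∃ C : ℝ≥0, ∀ a, κ a U ≤ C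

theorem IsLocallyBounded.exists_isOpen_superset_le {κ : Kernel α X} (hκ : κ.IsLocallyBounded)
    {K : Set X} (hK : IsCompact K) :
    ∃ V : Set X, IsOpen V ∧ K ⊆ V ∧ ∃ C : ℝ≥0, ∀ a, κ a V ≤ C := by
  choose U hUo hxU C hC using hκ
  obtain ⟨t, ht⟩ := hK.elim_finite_subcover U hUo fun x _ => mem_iUnion.2 ⟨x, hxU x⟩
  refine ⟨⋃ x ∈ t, U x, isOpen_biUnion fun x _ => hUo x, ht, ∑ x ∈ t, C x, fun a => ?_⟩
  calc κ a (⋃ x ∈ t, U x) ≤ ∑ x ∈ t, κ a (U x) := measure_biUnion_finset_le t U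
    _ ≤ ∑ x ∈ t, (C x : ℝ≥0∞) := Finset.sum_le_sum fun x _ => hC x a
    _ = ((∑ x ∈ t, C x : ℝ≥0) : ℝ≥0∞) := (ENNReal.ofNNReal_finsetSum _ _).symm

end ProbabilityTheory.Kernel

namespace MeasureTheory

variable {α β γ : Type*} [MeasurableSpace α]

theorem Measure.prod_dirac_prod_apply_prod [MeasurableSpace β] [MeasurableSpace γ]
    (μ : Measure α) (ν : Measure γ) [SFinite ν] (x : β) (A : Set α)
    {V : Set β} (hV : MeasurableSet V) (W : Set γ) :
    μ.prod ((Measure.dirac x).prod ν) (A ×ˢ V ×ˢ W) = μ A * V.indicator (fun _ => ν W) x := by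
  rw [Measure.prod_prod, Measure.prod_prod, Measure.dirac_apply' _ hV, ← indicator_mul_const]
  simp

theorem lintegral_comp_mul_of_ae_eq {μ : Measure α} {r : α → β} {u : β}
    (hr : ∀ᵐ x ∂μ, r x = u) (f : β → ℝ≥0∞) {g : α → ℝ≥0∞} (hg : Measurable g) :
    ∫⁻ x, f (r x) * g x ∂μ = f u * ∫⁻ x, g x ∂μ := by
  rw [← lintegral_const_mul _ hg]
  exact lintegral_congr_ae (hr.mono fun x hx => by simp only [hx])

end MeasureTheory

section

variable {S T G G₀ : Type*} [MeasurableSpace S] [MeasurableSpace T] [MeasurableSpace G]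
  [MeasurableSpace G₀]

theorem lintegral_bind_prod_dirac_prod_apply_prod_le {r d : G → G₀} (γp : Kernel G₀ S)
    (γq : Kernel G₀ T) [IsSFiniteKernel γq] (lamG : Kernel G₀ G)
    (hlamG : ∀ u, lamG u ((r ⁻¹' {u})ᶜ) = 0) (μG0 : Measure G₀)
    {A : Set S} (hA : MeasurableSet A) {V : Set G} (hV : MeasurableSet V) (W : Set T)
    {Cl Cq : ℝ≥0} (hCl : ∀ u, lamG u V ≤ Cl) (hCq : ∀ u, γq u W ≤ Cq) :
    ∫⁻ x, ((γp (r x)).prod ((Measure.dirac x).prod (γq (d x)))) (A ×ˢ V ×ˢ W) ∂μG0.bind lamG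
      ≤ (Cl * Cq : ℝ≥0) * ∫⁻ u, γp u A ∂μG0 := by
  calc _ = ∫⁻ x, γp (r x) A * V.indicator (fun _ => γq (d x) W) x ∂μG0.bind lamG := by
        simp only [Measure.prod_dirac_prod_apply_prod _ _ _ _ hV]
    _ ≤ ∫⁻ x, γp (r x) A * V.indicator (fun _ => (Cq : ℝ≥0∞)) x ∂μG0.bind lamG := by
        gcongr with x
        exact hCq (d x)
    _ ≤ ∫⁻ u, ∫⁻ x, γp (r x) A * V.indicator (fun _ => (Cq : ℝ≥0∞)) x ∂lamG u ∂μG0 :=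
        Measure.lintegral_bind_le _ _ _
    _ = ∫⁻ u, γp u A * (Cq * lamG u V) ∂μG0 := lintegral_congr fun u => by
        rw [lintegral_comp_mul_of_ae_eq (ae_iff.2 (hlamG u)) (γp · A)
          (measurable_const.indicator hV), lintegral_indicator_const hV]
    _ ≤ ∫⁻ u, (Cl * Cq : ℝ≥0) * γp u A ∂μG0 := lintegral_mono fun u => by
        rw [ENNReal.coe_mul, mul_comm _ (γp u A), mul_comm (Cl : ℝ≥0∞)]
        gcongr
        exact hCl u
    _ = (Cl * Cq : ℝ≥0) * ∫⁻ u, γp u A ∂μG0 := lintegral_const_mul _ (γp.measurable_coe hA)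

end

theorem stmt_15_general {S₀ T₀ G G₀ : Type*}
    [TopologicalSpace S₀] [MeasurableSpace S₀]
    [TopologicalSpace T₀] [MeasurableSpace T₀] [BorelSpace T₀]
    [TopologicalSpace G] [MeasurableSpace G] [BorelSpace G]
    [MeasurableSpace G₀]
    (r d : G → G₀)
    (γp : Kernel G₀ S₀) (γq : Kernel G₀ T₀) (lamG : Kernel G₀ G)
    [IsSFiniteKernel γq]
    (hlamG : ∀ u, lamG u ((r ⁻¹' {u})ᶜ) = 0)
    (hγqlb : ∀ t : T₀, ∃ U : Set T₀, IsOpen U ∧ t ∈ U ∧ ∃ C : ℝ≥0, ∀ u, γq u U ≤ C)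
    (hlamGlb : ∀ x : G, ∃ U : Set G, IsOpen U ∧ x ∈ U ∧ ∃ C : ℝ≥0, ∀ u, lamG u U ≤ C)
    (μG0 : Measure G₀) (μG : Measure G) (μS0 : Measure S₀)
    (μP0 : Measure (S₀ × G × T₀))
    (hμG : ∀ E : Set G, MeasurableSet E → μG E = ∫⁻ u, lamG u E ∂μG0)
    (hμS0 : ∀ E : Set S₀, MeasurableSet E → μS0 E = ∫⁻ u, γp u E ∂μG0)
    (hμP0 : ∀ E : Set (S₀ × G × T₀), MeasurableSet E →
      μP0 E = ∫⁻ x, ((γp (r x)).prod ((Measure.dirac x).prod (γq (d x)))) E ∂μG) :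
    ∀ K : Set (S₀ × G × T₀), IsCompact K → ∃ C : ℝ≥0,
      ∀ A : Set S₀, MeasurableSet A →
        μP0 (K ∩ (A ×ˢ ((univ : Set G) ×ˢ (univ : Set T₀)))) ≤ C * μS0 A := by
  intro K hK
  obtain ⟨V, hVo, hKV, Cl, hCl⟩ := Kernel.IsLocallyBounded.exists_isOpen_superset_le
    hlamGlb (hK.image (continuous_fst.comp continuous_snd))
  obtain ⟨W, hWo, hKW, Cq, hCq⟩ := Kernel.IsLocallyBounded.exists_isOpen_superset_le
    hγqlb (hK.image (continuous_snd.comp continuous_snd))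
  have hμG_bind : μG = μG0.bind lamG := Measure.ext fun E hE => by
    rw [hμG E hE, Measure.bind_apply hE lamG.measurable.aemeasurable]
  refine ⟨Cl * Cq, fun A hA => ?_⟩
  have hK_sub : K ∩ (A ×ˢ ((univ : Set G) ×ˢ (univ : Set T₀))) ⊆ A ×ˢ V ×ˢ W := by
    rintro ⟨s, x, t⟩ ⟨hK, hA, -⟩
    exact ⟨hA, hKV ⟨_, hK, rfl⟩, hKW ⟨_, hK, rfl⟩⟩
  calc μP0 (K ∩ (A ×ˢ ((univ : Set G) ×ˢ (univ : Set T₀)))) ≤ μP0 (A ×ˢ V ×ˢ W) :=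
        measure_mono hK_sub
    _ = ∫⁻ x, ((γp (r x)).prod ((Measure.dirac x).prod (γq (d x)))) (A ×ˢ V ×ˢ W) ∂μG :=
        hμP0 _ (hA.prod (hVo.measurableSet.prod hWo.measurableSet))
    _ ≤ (Cl * Cq : ℝ≥0) * μS0 A := by
        rw [hμS0 A hA, hμG_bind]
        exact lintegral_bind_prod_dirac_prod_apply_prod_le γp γq lamG hlamG μG0 hA
          hVo.measurableSet W hCl hCq

/-- Proposition 6.4 (π_S-half): the domination inequality
`μ_P⁰(K ∩ π_S⁻¹(Σ)) ≤ C_K μ_S⁰(Σ)` for compact `K` and Borel `Σ`. -/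
theorem stmt_15 {S₀ T₀ G G₀ : Type*}
    [TopologicalSpace S₀] [MeasurableSpace S₀] [BorelSpace S₀]
    [TopologicalSpace T₀] [MeasurableSpace T₀] [BorelSpace T₀]
    [TopologicalSpace G] [MeasurableSpace G] [BorelSpace G]
    [TopologicalSpace G₀] [MeasurableSpace G₀] [BorelSpace G₀]
    (p : S₀ → G₀) (q : T₀ → G₀) (r d : G → G₀)
    (hp : Measurable p) (hq : Measurable q) (hr : Measurable r) (hd : Measurable d)
    (γp : Kernel G₀ S₀) (γq : Kernel G₀ T₀) (lamG : Kernel G₀ G)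
    [IsSFiniteKernel γp] [IsSFiniteKernel γq] [IsSFiniteKernel lamG]
    (hγp : ∀ u, γp u ((p ⁻¹' {u})ᶜ) = 0)
    (hγq : ∀ u, γq u ((q ⁻¹' {u})ᶜ) = 0)
    (hlamG : ∀ u, lamG u ((r ⁻¹' {u})ᶜ) = 0)
    (hγqlb : ∀ t : T₀, ∃ U : Set T₀, IsOpen U ∧ t ∈ U ∧ ∃ C : ℝ≥0, ∀ u, γq u U ≤ C)
    (hlamGlb : ∀ x : G, ∃ U : Set G, IsOpen U ∧ x ∈ U ∧ ∃ C : ℝ≥0, ∀ u, lamG u U ≤ C)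
    (μG0 : Measure G₀) (μG : Measure G) (μS0 : Measure S₀)
    (μP0 : Measure (S₀ × G × T₀))
    (hμG : ∀ E : Set G, MeasurableSet E → μG E = ∫⁻ u, lamG u E ∂μG0)
    (hμS0 : ∀ E : Set S₀, MeasurableSet E → μS0 E = ∫⁻ u, γp u E ∂μG0)
    (hμP0 : ∀ E : Set (S₀ × G × T₀), MeasurableSet E →
      μP0 E = ∫⁻ x, ((γp (r x)).prod ((Measure.dirac x).prod (γq (d x)))) E ∂μG) :
    ∀ K : Set (S₀ × G × T₀), IsCompact K → ∃ C : ℝ≥0,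
      ∀ A : Set S₀, MeasurableSet A →
        μP0 (K ∩ (A ×ˢ ((univ : Set G) ×ˢ (univ : Set T₀)))) ≤ C * μS0 A :=
  stmt_15_general r d γp γq lamG hlamG hγqlb hlamGlb μG0 μG μS0 μP0 hμG hμS0 hμP0
end

section
/- Let S₀, T₀, G, G₀ be topological spaces with their Borel σ-algebras and Borel maps p : S₀ → G₀, q : T₀ → G₀, r, d : G → G₀. Let γ_p (from G₀ to S₀), γ_q (from G₀ to T₀) and λ_G (from G₀ to G) be s-finite kernels, with γ_p^u concentrated on p⁻¹{u}, γ_q^u concentrated on q⁻¹{u} and λ_G^u concentrated on r⁻¹{u} for every u, and with γ_p and λ_G locally bounded (every point of the target space has an open neighborhood U and a constant C such that the kernel measure of U is at most C for all parameters u ∈ G₀). Let μ_G⁰ be a measure on G₀, set μ_G = ∫ λ_G^u dμ_G⁰(u), μ_T⁰ = ∫ γ_q^u dμ_G⁰(u), and μ_P⁰(E) = ∫_G (γ_p^{r(x)} ⊗ δ_x ⊗ γ_q^{d(x)})(E) dμ_G(x) on S₀ × G × T₀. Assume there exist a continuous involution ι : G → G (ι ∘ ι = id) with r ∘ ι = d,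 and a measurable function w : G → (0, ∞) with ι_*μ_G = μ_G.withDensity w, such that w is locally bounded above (every point of G has an open neighborhood on which w is bounded by a constant). Then for every compact set K ⊆ S₀ × G × T₀ there exists a constant D_K ≥ 0 such that for every Borel set Ω ⊆ T₀: μ_P⁰(K ∩ (S₀ × G × Ω)) ≤ D_K · μ_T⁰(Ω). -/
/-!
By compactness, the projections of `K` to `S₀` and (after applying `ι`) to `G` have open
neighbourhoods `U` and `A` on which `γ_p`, `λ_G` and `w` are uniformly bounded. On
`U × ι⁻¹(A) × Ω` the integrand of `μ_P⁰` is at most `C_S · 1_{ι⁻¹A}(x) γ_q^{d(x)}(Ω)`. The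
substitution `x ↦ ι x`, which costs the density `w ≤ C_w` and turns `d` into `r`, bounds
`∫_{ι⁻¹A} γ_q^{d(x)}(Ω) dμ_G` by `C_w ∫_A γ_q^{r(x)}(Ω) dμ_G`; since `λ_G^u` lives on `r⁻¹{u}`,
disintegrating `μ_G` along `λ_G` gives `∫ γ_q^u(Ω) λ_G^u(A) dμ_G⁰(u) ≤ C_G μ_T⁰(Ω)`.
-/

open MeasureTheory ProbabilityTheory Set
open scoped ENNReal NNReal

theorem IsCompact.exists_isOpen_superset_of_local {X : Type*} [TopologicalSpace X]
    {P : Set X → Prop} (hempty : P ∅) (hunion : ∀ U V, P U → P V → P (U ∪ V))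
    {L : Set X} (hL : IsCompact L) (hloc : ∀ x ∈ L, ∃ U, IsOpen U ∧ x ∈ U ∧ P U) :
    ∃ U, IsOpen U ∧ L ⊆ U ∧ P U := by
  refine hL.induction_on ⟨∅, isOpen_empty, subset_rfl, hempty⟩ ?_ ?_ ?_
  · rintro s t hst ⟨U, hUo, htU, hU⟩
    exact ⟨U, hUo, hst.trans htU, hU⟩
  · rintro s t ⟨U, hUo, hsU, hU⟩ ⟨V, hVo, htV, hV⟩
    exact ⟨U ∪ V, hUo.union hVo, union_subset_union hsU htV, hunion U V hU hV⟩
  · intro x hx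
    obtain ⟨U, hUo, hxU, hU⟩ := hloc x hx
    exact ⟨U, mem_nhdsWithin_of_mem_nhds (hUo.mem_nhds hxU), U, hUo, subset_rfl, hU⟩

theorem IsCompact.exists_isOpen_superset_forall_measure_le {ι X : Type*} [TopologicalSpace X]
    [MeasurableSpace X] {κ : ι → Measure X} {L : Set X} (hL : IsCompact L)
    (h : ∀ x, ∃ U, IsOpen U ∧ x ∈ U ∧ ∃ C : ℝ≥0, ∀ u, κ u U ≤ C) :
    ∃ U, IsOpen U ∧ L ⊆ U ∧ ∃ C : ℝ≥0, ∀ u, κ u U ≤ C := by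
  refine hL.exists_isOpen_superset_of_local ⟨0, by simp⟩ ?_ fun x _ => h x
  rintro U V ⟨C, hC⟩ ⟨D, hD⟩
  refine ⟨C + D, fun u => ?_⟩
  calc κ u (U ∪ V) ≤ κ u U + κ u V := measure_union_le U V
    _ ≤ C + D := add_le_add (hC u) (hD u)
    _ = (C + D : ℝ≥0) := by push_cast; rfl

theorem IsCompact.exists_isOpen_superset_forall_le {X : Type*} [TopologicalSpace X]
    {w : X → ℝ≥0∞} {L : Set X} (hL : IsCompact L)
    (h : ∀ x, ∃ U, IsOpen U ∧ x ∈ U ∧ ∃ C : ℝ≥0, ∀ y ∈ U, w y ≤ C) :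
    ∃ U, IsOpen U ∧ L ⊆ U ∧ ∃ C : ℝ≥0, ∀ y ∈ U, w y ≤ C := by
  refine hL.exists_isOpen_superset_of_local ⟨0, by simp⟩ ?_ fun x _ => h x
  rintro U V ⟨C, hC⟩ ⟨D, hD⟩
  refine ⟨max C D, fun y hy => ?_⟩
  rcases hy with hy | hy
  · exact (hC y hy).trans (by exact_mod_cast le_max_left C D)
  · exact (hD y hy).trans (by exact_mod_cast le_max_right C D)

theorem lintegral_prod_dirac_prod_le {S G T : Type*} [MeasurableSpace S] [MeasurableSpace G]
    [MeasurableSpace T] (μ : Measure G) (α : G → Measure S) (β : G → Measure T)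
    {U : Set S} {V : Set G} {Ω : Set T} (hV : MeasurableSet V) {C : ℝ≥0}
    (hC : ∀ x, α x U ≤ C) :
    ∫⁻ x, ((α x).prod ((Measure.dirac x).prod (β x))) (U ×ˢ V ×ˢ Ω) ∂μ
      ≤ C * ∫⁻ x in V, β x Ω ∂μ := by
  rw [← lintegral_indicator hV, ← lintegral_const_mul' _ _ ENNReal.coe_ne_top]
  refine lintegral_mono fun x => ?_
  calc ((α x).prod ((Measure.dirac x).prod (β x))) (U ×ˢ V ×ˢ Ω)
      ≤ α x U * (V.indicator 1 x * β x Ω) := by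
        grw [Measure.prod_prod_le, Measure.prod_prod_le, Measure.dirac_apply' _ hV]
    _ ≤ C * V.indicator (fun x => β x Ω) x := by
        by_cases hx : x ∈ V
        · simpa [hx] using mul_le_mul_left (hC x) (β x Ω)
        · simp [hx]

theorem setLIntegral_preimage_le_of_map_eq_withDensity {G : Type*} [MeasurableSpace G]
    {μ : Measure G} {ι : G → G} {w : G → ℝ≥0∞} (hι : Measurable ι)
    (hinv : Function.Involutive ι) (hw : Measurable w) (hmap : μ.map ι = μ.withDensity w)
    (f : G → ℝ≥0∞) {A : Set G} (hA : MeasurableSet A) :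
    ∫⁻ x in ι ⁻¹' A, f x ∂μ ≤ ∫⁻ x in A, w x * f (ι x) ∂μ := by
  have he : MeasurableEmbedding ι :=
    .of_measurable_inverse hι (by simp [hinv.surjective.range_eq]) hι hinv.leftInverse
  calc ∫⁻ x in ι ⁻¹' A, f x ∂μ = ∫⁻ x in ι ⁻¹' A, f (ι (ι x)) ∂μ := by simp only [hinv _]
    _ = ∫⁻ x in A, f (ι x) ∂(μ.withDensity w) := by
        rw [← hmap, he.restrict_map, he.lintegral_map]
    _ ≤ ∫⁻ x in A, w x * f (ι x) ∂μ := by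
        rw [restrict_withDensity hA]
        exact lintegral_withDensity_le_lintegral_mul _ hw _

theorem setLIntegral_comp_bind_le {G G₀ : Type*} [MeasurableSpace G] [MeasurableSpace G₀]
    {r : G → G₀} (κ : G₀ → Measure G) (hκ : ∀ u, κ u ((r ⁻¹' {u})ᶜ) = 0) (μ₀ : Measure G₀)
    (g : G₀ → ℝ≥0∞) {A : Set G} (hA : MeasurableSet A) :
    ∫⁻ x in A, g (r x) ∂(μ₀.bind κ) ≤ ∫⁻ u, g u * κ u A ∂μ₀ := by
  rw [← lintegral_indicator hA]
  refine (Measure.lintegral_bind_le _ _ _).trans_eq (lintegral_congr fun u => ?_)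
  have hfiber : ∀ᵐ x ∂(κ u).restrict A, g (r x) = g u :=
    ae_restrict_of_ae (measure_eq_zero_iff_ae_notMem.mp (hκ u) |>.mono fun x hx => by simp_all)
  rw [lintegral_indicator hA, lintegral_congr_ae hfiber, setLIntegral_const]

theorem setLIntegral_preimage_comp_le {G G₀ : Type*} [MeasurableSpace G] [MeasurableSpace G₀]
    {r d : G → G₀} {κ : G₀ → Measure G} {μ₀ : Measure G₀} {ι : G → G} {w : G → ℝ≥0∞}
    (hκ : ∀ u, κ u ((r ⁻¹' {u})ᶜ) = 0) (hι : Measurable ι) (hinv : Function.Involutive ι)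
    (hdι : ∀ x, d (ι x) = r x) (hw : Measurable w)
    (hmap : (μ₀.bind κ).map ι = (μ₀.bind κ).withDensity w) {A : Set G} (hA : MeasurableSet A)
    {Cw CG : ℝ≥0} (hwA : ∀ x ∈ A, w x ≤ Cw) (hκA : ∀ u, κ u A ≤ CG) (g : G₀ → ℝ≥0∞) :
    ∫⁻ x in ι ⁻¹' A, g (d x) ∂(μ₀.bind κ) ≤ Cw * CG * ∫⁻ u, g u ∂μ₀ := by
  calc ∫⁻ x in ι ⁻¹' A, g (d x) ∂(μ₀.bind κ)
      ≤ ∫⁻ x in A, w x * g (r x) ∂(μ₀.bind κ) := by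
        simpa only [hdι] using
          setLIntegral_preimage_le_of_map_eq_withDensity hι hinv hw hmap (fun x => g (d x)) hA
    _ ≤ ∫⁻ x in A, Cw * g (r x) ∂(μ₀.bind κ) :=
        setLIntegral_mono' hA fun x hx => mul_le_mul_left (hwA x hx) _
    _ ≤ Cw * ∫⁻ u, g u * κ u A ∂μ₀ := by
        rw [lintegral_const_mul' _ _ ENNReal.coe_ne_top]
        gcongr
        exact setLIntegral_comp_bind_le κ hκ μ₀ g hA
    _ ≤ Cw * ∫⁻ u, g u * CG ∂μ₀ := by
        gcongr with u
        exact hκA u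
    _ = Cw * CG * ∫⁻ u, g u ∂μ₀ := by
        rw [lintegral_mul_const' _ _ ENNReal.coe_ne_top, mul_assoc, mul_comm (∫⁻ u, g u ∂μ₀)]

theorem stmt_16_general {S₀ T₀ G G₀ : Type*}
    [TopologicalSpace S₀] [MeasurableSpace S₀] [BorelSpace S₀]
    [TopologicalSpace T₀] [MeasurableSpace T₀]
    [TopologicalSpace G] [MeasurableSpace G] [BorelSpace G]
    [MeasurableSpace G₀]
    (r d : G → G₀)
    (γp : Kernel G₀ S₀) (γq : Kernel G₀ T₀) (lamG : Kernel G₀ G)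
    (hlamG : ∀ u, lamG u ((r ⁻¹' {u})ᶜ) = 0)
    (hγplb : ∀ s : S₀, ∃ U : Set S₀, IsOpen U ∧ s ∈ U ∧ ∃ C : ℝ≥0, ∀ u, γp u U ≤ C)
    (hlamGlb : ∀ x : G, ∃ U : Set G, IsOpen U ∧ x ∈ U ∧ ∃ C : ℝ≥0, ∀ u, lamG u U ≤ C)
    (μG0 : Measure G₀) (μG : Measure G) (μT0 : Measure T₀)
    (μP0 : Measure (S₀ × G × T₀))
    (hμG : ∀ E : Set G, MeasurableSet E → μG E = ∫⁻ u, lamG u E ∂μG0)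
    (hμT0 : ∀ E : Set T₀, MeasurableSet E → μT0 E = ∫⁻ u, γq u E ∂μG0)
    (hμP0 : ∀ E : Set (S₀ × G × T₀), MeasurableSet E →
      μP0 E = ∫⁻ x, ((γp (r x)).prod ((Measure.dirac x).prod (γq (d x)))) E ∂μG)
    (ι : G → G) (hι : Continuous ι) (hinv : ι ∘ ι = id) (hrι : r ∘ ι = d)
    (w : G → ℝ≥0∞) (hw : Measurable w)
    (hmap : μG.map ι = μG.withDensity w)
    (hwlb : ∀ x : G, ∃ U : Set G, IsOpen U ∧ x ∈ U ∧ ∃ C : ℝ≥0, ∀ y ∈ U, w y ≤ C) :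
    ∀ K : Set (S₀ × G × T₀), IsCompact K → ∃ D : ℝ≥0,
      ∀ Ω : Set T₀, MeasurableSet Ω →
        μP0 (K ∩ ((univ : Set S₀) ×ˢ ((univ : Set G) ×ˢ Ω))) ≤ D * μT0 Ω := by
  intro K hK
  have hιι : Function.Involutive ι := congrFun hinv
  have hdι (x : G) : d (ι x) = r x := by rw [← hrι, Function.comp_apply, hιι]
  have hbind : μG = μG0.bind lamG := Measure.ext fun E hE => by
    rw [hμG E hE, Measure.bind_apply hE lamG.measurable.aemeasurable]
  obtain ⟨U, hUo, hKU, CS, hCS⟩ :=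
    (hK.image continuous_fst).exists_isOpen_superset_forall_measure_le hγplb
  have hKG : IsCompact (ι '' ((fun z => z.2.1) '' K)) :=
    (hK.image (continuous_fst.comp continuous_snd)).image hι
  obtain ⟨A₁, hA₁o, hKA₁, CG, hCG⟩ := hKG.exists_isOpen_superset_forall_measure_le hlamGlb
  obtain ⟨A₂, hA₂o, hKA₂, Cw, hCw⟩ := hKG.exists_isOpen_superset_forall_le hwlb
  set A := A₁ ∩ A₂
  have hA : MeasurableSet A := (hA₁o.inter hA₂o).measurableSet
  have hιA : MeasurableSet (ι ⁻¹' A) := hA.preimage hι.measurable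
  refine ⟨CS * (Cw * CG), fun Ω hΩ => ?_⟩
  have hKsub : K ∩ (univ ×ˢ univ ×ˢ Ω) ⊆ U ×ˢ (ι ⁻¹' A) ×ˢ Ω := by
    rintro ⟨s, x, t⟩ ⟨hk, -, -, ht⟩
    have hιx : ι x ∈ ι '' ((fun z => z.2.1) '' K) := ⟨x, ⟨_, hk, rfl⟩, rfl⟩
    exact ⟨hKU ⟨_, hk, rfl⟩, ⟨hKA₁ hιx, hKA₂ hιx⟩, ht⟩
  calc μP0 (K ∩ (univ ×ˢ univ ×ˢ Ω))
      ≤ μP0 (U ×ˢ (ι ⁻¹' A) ×ˢ Ω) := measure_mono hKsub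
    _ ≤ CS * ∫⁻ x in ι ⁻¹' A, γq (d x) Ω ∂μG := by
        rw [hμP0 _ (hUo.measurableSet.prod (hιA.prod hΩ))]
        exact lintegral_prod_dirac_prod_le _ _ _ hιA fun x => hCS (r x)
    _ ≤ CS * (Cw * CG * ∫⁻ u, γq u Ω ∂μG0) := by
        rw [hbind] at hmap ⊢
        gcongr _ * ?_
        exact setLIntegral_preimage_comp_le hlamG hι.measurable hιι hdι hw hmap hA
          (fun x hx => hCw x hx.2) (fun u => (measure_mono inter_subset_left).trans (hCG u)) _
    _ = ↑(CS * (Cw * CG)) * μT0 Ω := by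
        rw [hμT0 Ω hΩ]
        push_cast
        ring

/-- Proposition 6.4 (π_T-half): under the local boundedness of the modular density
`w` (the Radon–Nikodym derivative of `ι_*μ_G` with respect to `μ_G`), the
domination inequality `μ_P⁰(K ∩ π_T⁻¹(Ω)) ≤ D_K μ_T⁰(Ω)` holds for compact `K`
and Borel `Ω`. -/
theorem stmt_16 {S₀ T₀ G G₀ : Type*}
    [TopologicalSpace S₀] [MeasurableSpace S₀] [BorelSpace S₀]
    [TopologicalSpace T₀] [MeasurableSpace T₀] [BorelSpace T₀]
    [TopologicalSpace G] [MeasurableSpace G] [BorelSpace G]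
    [TopologicalSpace G₀] [MeasurableSpace G₀] [BorelSpace G₀]
    (p : S₀ → G₀) (q : T₀ → G₀) (r d : G → G₀)
    (hp : Measurable p) (hq : Measurable q) (hr : Measurable r) (hd : Measurable d)
    (γp : Kernel G₀ S₀) (γq : Kernel G₀ T₀) (lamG : Kernel G₀ G)
    [IsSFiniteKernel γp] [IsSFiniteKernel γq] [IsSFiniteKernel lamG]
    (hγp : ∀ u, γp u ((p ⁻¹' {u})ᶜ) = 0)
    (hγq : ∀ u, γq u ((q ⁻¹' {u})ᶜ) = 0)
    (hlamG : ∀ u, lamG u ((r ⁻¹' {u})ᶜ) = 0)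
    (hγplb : ∀ s : S₀, ∃ U : Set S₀, IsOpen U ∧ s ∈ U ∧ ∃ C : ℝ≥0, ∀ u, γp u U ≤ C)
    (hlamGlb : ∀ x : G, ∃ U : Set G, IsOpen U ∧ x ∈ U ∧ ∃ C : ℝ≥0, ∀ u, lamG u U ≤ C)
    (μG0 : Measure G₀) (μG : Measure G) (μT0 : Measure T₀)
    (μP0 : Measure (S₀ × G × T₀))
    (hμG : ∀ E : Set G, MeasurableSet E → μG E = ∫⁻ u, lamG u E ∂μG0)
    (hμT0 : ∀ E : Set T₀, MeasurableSet E → μT0 E = ∫⁻ u, γq u E ∂μG0)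
    (hμP0 : ∀ E : Set (S₀ × G × T₀), MeasurableSet E →
      μP0 E = ∫⁻ x, ((γp (r x)).prod ((Measure.dirac x).prod (γq (d x)))) E ∂μG)
    (ι : G → G) (hι : Continuous ι) (hinv : ι ∘ ι = id) (hrι : r ∘ ι = d)
    (w : G → ℝ≥0∞) (hw : Measurable w)
    (hwpos : ∀ x, 0 < w x) (hwfin : ∀ x, w x < ∞)
    (hmap : μG.map ι = μG.withDensity w)
    (hwlb : ∀ x : G, ∃ U : Set G, IsOpen U ∧ x ∈ U ∧ ∃ C : ℝ≥0, ∀ y ∈ U, w y ≤ C) :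
    ∀ K : Set (S₀ × G × T₀), IsCompact K → ∃ D : ℝ≥0,
      ∀ Ω : Set T₀, MeasurableSet Ω →
        μP0 (K ∩ ((univ : Set S₀) ×ˢ ((univ : Set G) ×ˢ Ω))) ≤ D * μT0 Ω :=
  stmt_16_general r d γp γq lamG hlamG hγplb hlamGlb μG0 μG μT0 μP0 hμG hμT0 hμP0 ι hι hinv hrι w hw
    hmap hwlb
end
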